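/- arXiv:2102.06385 — 4 statements merged into one kernel-verified Lean document; each statement's English description precedes it below -/
import Mathlib

section
/- Suppose the primal BwK LP has a unique optimal solution x*. For each resource j ∈ [d], let OPT_j be the optimal value of the penalized LP max μᵀx − (Tb − C_{j,·}x) s.t. Cx ≤ B, x ≥ 0, where C_{j,·} is the j-th row of C. Then OPT_j ≤ OPT_LP for all j; OPT_j = OPT_LP if and only if constraint j is binding at x* (i.e. (Cx*)_j = Tb); and OPT_j < OPT_LP if and only if (Cx*)_j < Tb. -/
/-!
Subtracting the slack `p x = Tb - (Cx)ⱼ ≥ 0` of a constraint can only lower the value of a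
feasible point, so `OPTⱼ ≤ OPT_LP`. Equality forces a maximizer `x₀` of the penalized LP to
have `μᵀx₀ = OPT_LP` and zero slack; by uniqueness `x₀ = x*`, so constraint `j` binds at `x*`.
Conversely, if it binds, `x*` itself attains `OPT_LP` in the penalized LP.
-/

section Penalized

variable {α : Type*} {S : Set α} {f p : α → ℝ} {v w : ℝ}

theorem le_of_mem_image_sub_of_nonneg (hp : ∀ x ∈ S, 0 ≤ p x) (hv : v ∈ upperBounds (f '' S))
    (hw : w ∈ (fun x => f x - p x) '' S) : w ≤ v := by
  obtain ⟨x, hxS, rfl⟩ := hw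
  linarith [hp x hxS, hv ⟨x, hxS, rfl⟩]

variable {xs : α} (hp : ∀ x ∈ S, 0 ≤ p x) (hxs : xs ∈ S) (hv : f xs ∈ upperBounds (f '' S))
  (huniq : ∀ x ∈ S, f x = f xs → x = xs) (hw : IsGreatest ((fun x => f x - p x) '' S) w)
include hp hxs hv huniq hw

theorem IsGreatest.eq_iff_eq_zero_of_unique_max : w = f xs ↔ p xs = 0 := by
  constructor
  · rintro rfl
    obtain ⟨x, hxS, hx⟩ := hw.1
    have hfx : f x ≤ f xs := hv ⟨x, hxS, rfl⟩
    have hfx_eq : f x = f xs := by linarith [hp x hxS]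
    have hpx : p x = 0 := by linarith
    rwa [huniq x hxS hfx_eq] at hpx
  · intro hpxs
    have hxs_mem : f xs ∈ (fun x => f x - p x) '' S := ⟨xs, hxs, by simp [hpxs]⟩
    exact le_antisymm (le_of_mem_image_sub_of_nonneg hp hv hw.1) (hw.2 hxs_mem)

theorem IsGreatest.lt_iff_pos_of_unique_max : w < f xs ↔ 0 < p xs := by
  rw [(le_of_mem_image_sub_of_nonneg hp hv hw.1).lt_iff_ne, (hp xs hxs).lt_iff_ne', ne_eq,
    ne_eq, hw.eq_iff_eq_zero_of_unique_max hp hxs hv huniq]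

end Penalized

def feasibleRegion {m d : ℕ} (C : Matrix (Fin d) (Fin m) ℝ) (B : Fin d → ℝ) :
    Set (Fin m → ℝ) :=
  {x | (∀ i, 0 ≤ x i) ∧ ∀ j, C.mulVec x j ≤ B j}

theorem setOf_exists_feasible_eq_image {m d : ℕ} (C : Matrix (Fin d) (Fin m) ℝ) (B : Fin d → ℝ)
    (g : (Fin m → ℝ) → ℝ) :
    {r : ℝ | ∃ x : Fin m → ℝ, (∀ i, 0 ≤ x i) ∧ (∀ j, C.mulVec x j ≤ B j) ∧ r = g x} =
      g '' feasibleRegion C B := by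
  ext r
  exact exists_congr fun x => by rw [← and_assoc, eq_comm]; rfl

theorem stmt4_general (m d : ℕ)
    (μ : Fin m → ℝ) (C : Matrix (Fin d) (Fin m) ℝ)
    (b T : ℝ)
    (B : Fin d → ℝ) (hB : B = fun _ => T * b)
    (OPTLP : ℝ) (xstar : Fin m → ℝ)
    -- x* is optimal for the primal LP with value OPT_LP
    (hxfeas : (∀ i, 0 ≤ xstar i) ∧ (∀ j, C.mulVec xstar j ≤ B j))
    (hxval : μ ⬝ᵥ xstar = OPTLP)
    (hOPT : IsGreatest {r : ℝ | ∃ x : Fin m → ℝ,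
      (∀ i, 0 ≤ x i) ∧ (∀ j, C.mulVec x j ≤ B j) ∧ r = μ ⬝ᵥ x} OPTLP)
    -- x* is the unique optimal solution
    (huniq : ∀ x' : Fin m → ℝ, (∀ i, 0 ≤ x' i) → (∀ j, C.mulVec x' j ≤ B j) →
      μ ⬝ᵥ x' = OPTLP → x' = xstar) :
    ∀ j : Fin d, ∀ OPTj : ℝ,
      IsGreatest {r : ℝ | ∃ x : Fin m → ℝ,
        (∀ i, 0 ≤ x i) ∧ (∀ j', C.mulVec x j' ≤ B j') ∧
        r = μ ⬝ᵥ x - (T * b - C.mulVec x j)} OPTj →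
      (OPTj ≤ OPTLP ∧ (OPTj = OPTLP ↔ C.mulVec xstar j = T * b) ∧
        (OPTj < OPTLP ↔ C.mulVec xstar j < T * b)) := by
  intro j OPTj hOPTj
  subst hxval hB
  rw [setOf_exists_feasible_eq_image] at hOPT hOPTj
  have hslack (x) (hx : x ∈ feasibleRegion C fun _ => T * b) : 0 ≤ T * b - C.mulVec x j :=
    sub_nonneg.2 (hx.2 j)
  have huniq' (x) (hx : x ∈ feasibleRegion C fun _ => T * b) := huniq x hx.1 hx.2
  refine ⟨le_of_mem_image_sub_of_nonneg hslack hOPT.2 hOPTj.1, ?_, ?_⟩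
  · rw [hOPTj.eq_iff_eq_zero_of_unique_max hslack hxfeas hOPT.2 huniq', sub_eq_zero, eq_comm]
  · rw [hOPTj.lt_iff_pos_of_unique_max hslack hxfeas hOPT.2 huniq', sub_pos]

/-- If the primal BwK LP has a unique optimal solution `x*`, then for every
resource `j`, the value `OPTⱼ` of the penalized LP
`max μᵀx − (Tb − C_{j,·} x)  s.t. Cx ≤ B, x ≥ 0` satisfies `OPTⱼ ≤ OPT_LP`,
`OPTⱼ = OPT_LP ↔ (Cx*)ⱼ = Tb`, and `OPTⱼ < OPT_LP ↔ (Cx*)ⱼ < Tb`. -/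
theorem stmt4 (m d : ℕ) (hm : 0 < m) (hd : 0 < d)
    (μ : Fin m → ℝ) (C : Matrix (Fin d) (Fin m) ℝ)
    (b T : ℝ) (hb : 0 < b) (hb1 : b ≤ 1) (hT : 0 < T)
    (hμ : ∀ i, μ i ∈ Set.Icc (0 : ℝ) 1)
    (hC : ∀ j i, C j i ∈ Set.Icc (0 : ℝ) 1)
    (hrow : ∀ i, C ⟨0, hd⟩ i = b)
    (B : Fin d → ℝ) (hB : B = fun _ => T * b)
    (OPTLP : ℝ) (xstar : Fin m → ℝ)
    -- x* is optimal for the primal LP with value OPT_LP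
    (hxfeas : (∀ i, 0 ≤ xstar i) ∧ (∀ j, C.mulVec xstar j ≤ B j))
    (hxval : μ ⬝ᵥ xstar = OPTLP)
    (hOPT : IsGreatest {r : ℝ | ∃ x : Fin m → ℝ,
      (∀ i, 0 ≤ x i) ∧ (∀ j, C.mulVec x j ≤ B j) ∧ r = μ ⬝ᵥ x} OPTLP)
    -- x* is the unique optimal solution
    (huniq : ∀ x' : Fin m → ℝ, (∀ i, 0 ≤ x' i) → (∀ j, C.mulVec x' j ≤ B j) →
      μ ⬝ᵥ x' = OPTLP → x' = xstar) :
    ∀ j : Fin d, ∀ OPTj : ℝ,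
      IsGreatest {r : ℝ | ∃ x : Fin m → ℝ,
        (∀ i, 0 ≤ x i) ∧ (∀ j', C.mulVec x j' ≤ B j') ∧
        r = μ ⬝ᵥ x - (T * b - C.mulVec x j)} OPTj →
      (OPTj ≤ OPTLP ∧ (OPTj = OPTLP ↔ C.mulVec xstar j = T * b) ∧
        (OPTj < OPTLP ↔ C.mulVec xstar j < T * b)) :=
  stmt4_general m d μ C b T B hB OPTLP xstar hxfeas hxval hOPT huniq
end

section
/- Let ε ≥ 0, b ∈ (0,1], T > 0, B = Tb·𝟙 ∈ ℝ^d. Suppose μ, μ^U ∈ ℝ^m satisfy μ ≤ μ^U ≤ μ + ε·𝟙 entrywise with μ ∈ [0,1]^m, and C, C^L ∈ ℝ^{d×m} satisfy 0 ≤ C^L ≤ C ≤ C^L + ε·𝟙𝟙ᵀ entrywise, with the first rows of both C and C^L equal to b·𝟙ᵀ. For an arm i ∈ [m], let OPT_i be the optimal value of max μᵀx s.t. Cx ≤ B, x_i = 0, x ≥ 0, and let OPT_i^U be the optimal value of max (μ^U)ᵀx s.t. C^L x ≤ B, x_i = 0, x ≥ 0. Then OPT_i ≤ OPT_i^U ≤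 OPT_i + (1 + 1/b)·εT. -/
open Matrix Finset

/-!
The time row `b𝟙ᵀ` of `C^L` forces `∑ₖ xₖ ≤ T` on every feasible point. Hence an optimal
point `x` of the optimistic LP violates the true constraints by at most `εT = (ε/b)·B`, so
`x / (1 + ε/b)` is feasible for the true LP, while the optimistic rewards exceed the true ones
on `x` by at most `εT`. Combined with `OPTᵢ ≤ T` this gives the upper bound; the lower bound
holds because the true feasible region and rewards are dominated by the optimistic ones.
-/

section

variable {ι κ : Type*} [Fintype ι]

def lpValues (A : Matrix κ ι ℝ) (B : κ → ℝ) (i : ι) (c : ι → ℝ) : Set ℝ :=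
  {r | ∃ x : ι → ℝ, (∀ k, 0 ≤ x k) ∧ (∀ j, A.mulVec x j ≤ B j) ∧ x i = 0 ∧ r = c ⬝ᵥ x}

theorem mulVec_le_mulVec_of_nonneg {A A' : Matrix κ ι ℝ} {x : ι → ℝ} (hA : ∀ j k, A j k ≤ A' j k)
    (hx : 0 ≤ x) : A *ᵥ x ≤ A' *ᵥ x :=
  fun j => dotProduct_le_dotProduct_of_nonneg_right (hA j) hx

theorem dotProduct_le_add_mul_sum {u v x : ι → ℝ} {ε : ℝ} (huv : ∀ k, u k ≤ v k + ε)
    (hx : 0 ≤ x) : u ⬝ᵥ x ≤ v ⬝ᵥ x + ε * ∑ k, x k := by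
  have h := dotProduct_le_dotProduct_of_nonneg_right (v := v + ε • 1)
    (fun k => by simpa using huv k) hx
  rwa [add_dotProduct, smul_dotProduct, one_dotProduct, smul_eq_mul] at h

theorem dotProduct_le_sum_of_le_one {c x : ι → ℝ} (hc : ∀ k, c k ≤ 1) (hx : 0 ≤ x) :
    c ⬝ᵥ x ≤ ∑ k, x k := by
  simpa using dotProduct_le_add_mul_sum (v := 0) (ε := 1) (by simpa using hc) hx

theorem sum_le_of_mulVec_le_of_row_eq {A : Matrix κ ι ℝ} {x : ι → ℝ} {b T : ℝ} (hb : 0 < b)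
    {j₀ : κ} (hrow : ∀ k, A j₀ k = b) (hx : (A *ᵥ x) j₀ ≤ T * b) : ∑ k, x k ≤ T := by
  have hAx : (A *ᵥ x) j₀ = ∑ k, x k * b := by simp [mulVec, dotProduct, hrow, mul_comm]
  rw [hAx, ← sum_mul] at hx
  exact le_of_mul_le_mul_right hx hb

theorem le_of_mem_lpValues_of_mem_upperBounds {A A' : Matrix κ ι ℝ} {B : κ → ℝ} {i : ι}
    {c c' : ι → ℝ} {p q : ℝ} (hA : ∀ j k, A' j k ≤ A j k) (hc : c ≤ c') (hp : p ∈ lpValues A B i c)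
    (hq : q ∈ upperBounds (lpValues A' B i c')) : p ≤ q := by
  obtain ⟨x, hx0, hAx, hxi, rfl⟩ := hp
  have hfeas : c' ⬝ᵥ x ∈ lpValues A' B i c' :=
    ⟨x, hx0, fun j => (mulVec_le_mulVec_of_nonneg hA hx0 j).trans (hAx j), hxi, rfl⟩
  exact (dotProduct_le_dotProduct_of_nonneg_right hc hx0).trans (hq hfeas)

theorem dotProduct_le_mul_of_mulVec_le_mul {A : Matrix κ ι ℝ} {B : κ → ℝ} {i : ι}
    {c x : ι → ℝ} {D q : ℝ} (hD : 0 < D) (hq : q ∈ upperBounds (lpValues A B i c))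
    (hx0 : 0 ≤ x) (hAx : ∀ j, (A *ᵥ x) j ≤ D * B j) (hxi : x i = 0) : c ⬝ᵥ x ≤ D * q := by
  have hfeas : c ⬝ᵥ (D⁻¹ • x) ∈ lpValues A B i c := by
    refine ⟨D⁻¹ • x, fun k => smul_nonneg (inv_nonneg.2 hD.le) (hx0 k), fun j => ?_, ?_, rfl⟩
    · rw [mulVec_smul, Pi.smul_apply, smul_eq_mul, inv_mul_le_iff₀ hD]
      exact hAx j
    · simp [hxi]
  have h := hq hfeas
  rwa [dotProduct_smul, smul_eq_mul, inv_mul_le_iff₀ hD] at h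

end

theorem stmt7_general (m d : ℕ) (hd : 0 < d)
    (μ μU : Fin m → ℝ) (C CL : Matrix (Fin d) (Fin m) ℝ)
    (ε b T : ℝ) (hε : 0 ≤ ε) (hb : 0 < b)
    (B : Fin d → ℝ) (hB : B = fun _ => T * b)
    (hμ : ∀ i, μ i ∈ Set.Icc (0 : ℝ) 1)
    (hμU : ∀ i, μ i ≤ μU i ∧ μU i ≤ μ i + ε)
    (hCLC : ∀ j i, CL j i ≤ C j i ∧ C j i ≤ CL j i + ε)
    (hrowL : ∀ i, CL ⟨0, hd⟩ i = b)
    (i : Fin m) (OPTi OPTiU : ℝ)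
    (hOPTi : IsGreatest {r : ℝ | ∃ x : Fin m → ℝ,
      (∀ i', 0 ≤ x i') ∧ (∀ j, C.mulVec x j ≤ B j) ∧ x i = 0 ∧ r = μ ⬝ᵥ x} OPTi)
    (hOPTiU : IsGreatest {r : ℝ | ∃ x : Fin m → ℝ,
      (∀ i', 0 ≤ x i') ∧ (∀ j, CL.mulVec x j ≤ B j) ∧ x i = 0 ∧ r = μU ⬝ᵥ x} OPTiU) :
    OPTi ≤ OPTiU ∧ OPTiU ≤ OPTi + (1 + 1 / b) * ε * T := by
  have hCL_le : ∀ j k, CL j k ≤ C j k := fun j k => (hCLC j k).1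
  refine ⟨le_of_mem_lpValues_of_mem_upperBounds hCL_le (fun k => (hμU k).1) hOPTi.1 hOPTiU.2, ?_⟩
  subst hB
  have hsum {x : Fin m → ℝ} (hx : ∀ j, (CL *ᵥ x) j ≤ T * b) : ∑ k, x k ≤ T :=
    sum_le_of_mulVec_le_of_row_eq hb hrowL (hx ⟨0, hd⟩)
  obtain ⟨x₀, hx₀0, hx₀C, -, rfl⟩ := hOPTi.1
  obtain ⟨x, hx0, hxCL, hxi, rfl⟩ := hOPTiU.1
  have hOPTi_le : μ ⬝ᵥ x₀ ≤ T := (dotProduct_le_sum_of_le_one (fun k => (hμ k).2) hx₀0).trans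
    (hsum fun j => (mulVec_le_mulVec_of_nonneg hCL_le hx₀0 j).trans (hx₀C j))
  have hεsum : ε * ∑ k, x k ≤ ε * T := mul_le_mul_of_nonneg_left (hsum hxCL) hε
  have hCx (j : Fin d) : (C *ᵥ x) j ≤ (1 + ε / b) * (T * b) :=
    calc (C *ᵥ x) j ≤ (CL *ᵥ x) j + ε * ∑ k, x k :=
          dotProduct_le_add_mul_sum (fun k => (hCLC j k).2) hx0
      _ ≤ T * b + ε * T := add_le_add (hxCL j) hεsum
      _ = (1 + ε / b) * (T * b) := by field_simp
  have hμx : μ ⬝ᵥ x ≤ (1 + ε / b) * (μ ⬝ᵥ x₀) :=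
    dotProduct_le_mul_of_mulVec_le_mul (by positivity) hOPTi.2 hx0 hCx hxi
  have hμUx : μU ⬝ᵥ x ≤ μ ⬝ᵥ x + ε * T :=
    (dotProduct_le_add_mul_sum (fun k => (hμU k).2) hx0).trans (by linarith)
  have hεb : ε / b * (μ ⬝ᵥ x₀) ≤ ε / b * T := mul_le_mul_of_nonneg_left hOPTi_le (by positivity)
  have hconst : (1 + 1 / b) * ε * T = ε / b * T + ε * T := by field_simp; ring
  linarith

/-- If `μ ≤ μ^U ≤ μ + ε𝟙` and `0 ≤ C^L ≤ C ≤ C^L + ε𝟙𝟙ᵀ` with the first rows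
of `C` and `C^L` equal to `b𝟙ᵀ`, then for any arm `i` the UCB value `OPTᵢ^U` of
`max (μ^U)ᵀx s.t. C^L x ≤ B, xᵢ = 0, x ≥ 0` satisfies
`OPTᵢ ≤ OPTᵢ^U ≤ OPTᵢ + (1 + 1/b)·εT`. -/
theorem stmt7 (m d : ℕ) (hm : 0 < m) (hd : 0 < d)
    (μ μU : Fin m → ℝ) (C CL : Matrix (Fin d) (Fin m) ℝ)
    (ε b T : ℝ) (hε : 0 ≤ ε) (hb : 0 < b) (hb1 : b ≤ 1) (hT : 0 < T)
    (B : Fin d → ℝ) (hB : B = fun _ => T * b)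
    (hμ : ∀ i, μ i ∈ Set.Icc (0 : ℝ) 1)
    (hμU : ∀ i, μ i ≤ μU i ∧ μU i ≤ μ i + ε)
    (hCL0 : ∀ j i, 0 ≤ CL j i)
    (hCLC : ∀ j i, CL j i ≤ C j i ∧ C j i ≤ CL j i + ε)
    (hrow : ∀ i, C ⟨0, hd⟩ i = b) (hrowL : ∀ i, CL ⟨0, hd⟩ i = b)
    (i : Fin m) (OPTi OPTiU : ℝ)
    (hOPTi : IsGreatest {r : ℝ | ∃ x : Fin m → ℝ,
      (∀ i', 0 ≤ x i') ∧ (∀ j, C.mulVec x j ≤ B j) ∧ x i = 0 ∧ r = μ ⬝ᵥ x} OPTi)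
    (hOPTiU : IsGreatest {r : ℝ | ∃ x : Fin m → ℝ,
      (∀ i', 0 ≤ x i') ∧ (∀ j, CL.mulVec x j ≤ B j) ∧ x i = 0 ∧ r = μU ⬝ᵥ x} OPTiU) :
    OPTi ≤ OPTiU ∧ OPTiU ≤ OPTi + (1 + 1 / b) * ε * T :=
  stmt7_general m d hd μ μU C CL ε b T hε hb B hB hμ hμU hCLC hrowL i OPTi OPTiU hOPTi hOPTiU
end

section
/- Let ε ≥ 0, b ∈ (0,1], T > 0, B = Tb·𝟙 ∈ ℝ^d. Suppose μ, μ^U ∈ ℝ^m satisfy μ ≤ μ^U ≤ μ + ε·𝟙 with μ ∈ [0,1]^m; C, C^L ∈ ℝ^{d×m} satisfy 0 ≤ C^L ≤ C ≤ C^L + ε·𝟙𝟙ᵀ entrywise with the first rows of C and C^L both equal to b·𝟙ᵀ; and a row estimate C^U_{j,·} satisfies C_{j,·} ≤ C^U_{j,·} ≤ C_{j,·} + ε·𝟙ᵀ. Let OPT_j be the optimal value of min Bᵀy − Tb s.t. Cᵀy ≥ μ + (C_{j,·})ᵀ, y ≥ 0, and let OPT_j^U be the optimal value of min Bᵀy −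 Tb s.t. (C^L)ᵀy ≥ μ^U + (C^U_{j,·})ᵀ, y ≥ 0. Then OPT_j ≤ OPT_j^U ≤ OPT_j + 3·(2 + 1/b)·εT. -/
open Matrix Finset

/-!
Any `y` feasible for the optimistic program is feasible for the true one, because `C^L ≤ C` and
`μ + C_{j,·} ≤ μ^U + C^U_{j,·}`; this gives `OPTⱼ ≤ OPTⱼ^U`. Conversely, an optimal `y` of the true
program becomes feasible for the optimistic one once its time coordinate is raised by
`(ε ∑ y + 2ε) / b`, which costs `Tε (∑ y + 2)`. Finally `∑ y ≤ 1 + 1/b`, since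
`b⁻¹ e₁ + e_j` is feasible with value `T`, so `OPTⱼ ≤ T`.
-/

lemma transpose_mulVec_add_single_apply {ι κ R : Type*} [Fintype ι] [DecidableEq ι]
    [NonUnitalNonAssocSemiring R] (A : Matrix ι κ R) (y : ι → R) (k : ι) (t : R) (i : κ) :
    (Aᵀ *ᵥ (y + Pi.single k t)) i = (Aᵀ *ᵥ y) i + A k i * t := by
  simp [mulVec_add, mulVec_single]

lemma const_dotProduct {ι R : Type*} [Fintype ι] [NonUnitalNonAssocSemiring R] (c : R)
    (y : ι → R) : (fun _ => c) ⬝ᵥ y = c * ∑ k, y k := by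
  simp [dotProduct, mul_sum]

section TransposeMulVec

variable {ι κ R : Type*} [Fintype ι] [Semiring R] [PartialOrder R] [IsOrderedRing R]
  {A A' : Matrix ι κ R} {y : ι → R}

lemma transpose_mulVec_apply_le (hA : ∀ k i, A k i ≤ A' k i) (hy : ∀ k, 0 ≤ y k) (i : κ) :
    (Aᵀ *ᵥ y) i ≤ (A'ᵀ *ᵥ y) i :=
  sum_le_sum fun k _ => mul_le_mul_of_nonneg_right (hA k i) (hy k)

lemma transpose_mulVec_apply_le_add_sum {ε : R} (hA : ∀ k i, A k i ≤ A' k i + ε)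
    (hy : ∀ k, 0 ≤ y k) (i : κ) :
    (Aᵀ *ᵥ y) i ≤ (A'ᵀ *ᵥ y) i + ε * ∑ k, y k :=
  calc (Aᵀ *ᵥ y) i ≤ ∑ k, (A' k i + ε) * y k :=
        sum_le_sum fun k _ => mul_le_mul_of_nonneg_right (hA k i) (hy k)
    _ = (A'ᵀ *ᵥ y) i + ε * ∑ k, y k := by
        simp only [add_mul, sum_add_distrib, mul_sum]; rfl

end TransposeMulVec

section DualLP

variable {ι κ : Type*} [Fintype ι] {A A' : Matrix ι κ ℝ} {c c' : κ → ℝ}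
  {w y : ι → ℝ} {r₀ : ℝ} {k₀ : ι} {b : ℝ}

/-- `IsLeast (dualValues A c w r₀) v` says that `v` is the optimal value of
`min wᵀy - r₀ s.t. Aᵀy ≥ c, y ≥ 0`. -/
def dualValues (A : Matrix ι κ ℝ) (c : κ → ℝ) (w : ι → ℝ) (r₀ : ℝ) : Set ℝ :=
  {r | ∃ y : ι → ℝ, (∀ k, 0 ≤ y k) ∧ (∀ i, c i ≤ (Aᵀ *ᵥ y) i) ∧ r = w ⬝ᵥ y - r₀}

lemma dualValues_subset (hA : ∀ k i, A k i ≤ A' k i) (hc : ∀ i, c' i ≤ c i) :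
    dualValues A c w r₀ ⊆ dualValues A' c' w r₀ := by
  rintro _ ⟨y, hy0, hy, rfl⟩
  exact ⟨y, hy0, fun i => (hc i).trans ((hy i).trans (transpose_mulVec_apply_le hA hy0 i)), rfl⟩

lemma mem_dualValues_single_add_single [DecidableEq ι] (hrow : ∀ i, A k₀ i = b) (hb : 0 < b)
    (j : ι) (hc : ∀ i, c i ≤ 1 + A j i) :
    w k₀ * b⁻¹ + w j - r₀ ∈ dualValues A c w r₀ := by
  refine ⟨Pi.single k₀ b⁻¹ + Pi.single j 1, ?_, fun i => ?_, ?_⟩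
  · show (0 : ι → ℝ) ≤ _
    exact add_nonneg (Pi.single_nonneg.2 (inv_nonneg.2 hb.le)) (Pi.single_nonneg.2 zero_le_one)
  · rw [transpose_mulVec_add_single_apply]
    simpa [mulVec_single, hrow, hb.ne'] using hc i
  · rw [dotProduct_add, dotProduct_single, dotProduct_single, mul_one]

lemma add_single_mem_dualValues [DecidableEq ι] {ε δ : ℝ} (hA : ∀ k i, A k i ≤ A' k i + ε)
    (hrow : ∀ i, A' k₀ i = b) (hb : 0 < b) (hε : 0 ≤ ε) (hδ : 0 ≤ δ) (hc : ∀ i, c' i ≤ c i + δ)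
    (hy0 : ∀ k, 0 ≤ y k) (hy : ∀ i, c i ≤ (Aᵀ *ᵥ y) i) :
    w ⬝ᵥ y - r₀ + w k₀ * ((ε * ∑ k, y k + δ) / b) ∈ dualValues A' c' w r₀ := by
  have ht : 0 ≤ (ε * ∑ k, y k + δ) / b :=
    div_nonneg (add_nonneg (mul_nonneg hε (sum_nonneg fun k _ => hy0 k)) hδ) hb.le
  refine ⟨y + Pi.single k₀ ((ε * ∑ k, y k + δ) / b), ?_, fun i => ?_, ?_⟩
  · show (0 : ι → ℝ) ≤ _
    exact add_nonneg hy0 (Pi.single_nonneg.2 ht)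
  · rw [transpose_mulVec_add_single_apply, hrow, mul_div_cancel₀ _ hb.ne']
    linarith [hc i, hy i, transpose_mulVec_apply_le_add_sum hA hy0 i]
  · rw [dotProduct_add, dotProduct_single]
    ring

end DualLP

theorem stmt8_general (m d : ℕ) (hd : 0 < d)
    (μ μU : Fin m → ℝ) (C CL : Matrix (Fin d) (Fin m) ℝ)
    (ε b T : ℝ) (hε : 0 ≤ ε) (hb : 0 < b) (hT : 0 < T)
    (B : Fin d → ℝ) (hB : B = fun _ => T * b)
    (hμ : ∀ i, μ i ∈ Set.Icc (0 : ℝ) 1)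
    (hμU : ∀ i, μ i ≤ μU i ∧ μU i ≤ μ i + ε)
    (hCLC : ∀ j i, CL j i ≤ C j i ∧ C j i ≤ CL j i + ε)
    (hrow : ∀ i, C ⟨0, hd⟩ i = b) (hrowL : ∀ i, CL ⟨0, hd⟩ i = b)
    (j : Fin d) (CUrow : Fin m → ℝ)
    (hCUrow : ∀ i, C j i ≤ CUrow i ∧ CUrow i ≤ C j i + ε)
    (OPTj OPTjU : ℝ)
    (hOPTj : IsLeast {r : ℝ | ∃ y : Fin d → ℝ,
      (∀ j', 0 ≤ y j') ∧ (∀ i, μ i + C j i ≤ Cᵀ.mulVec y i) ∧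
      r = B ⬝ᵥ y - T * b} OPTj)
    (hOPTjU : IsLeast {r : ℝ | ∃ y : Fin d → ℝ,
      (∀ j', 0 ≤ y j') ∧ (∀ i, μU i + CUrow i ≤ CLᵀ.mulVec y i) ∧
      r = B ⬝ᵥ y - T * b} OPTjU) :
    OPTj ≤ OPTjU ∧ OPTjU ≤ OPTj + 3 * (2 + 1 / b) * ε * T := by
  subst hB
  refine ⟨hOPTjU.mono hOPTj (dualValues_subset (fun k i => (hCLC k i).1)
    fun i => add_le_add (hμU i).1 (hCUrow i).1), ?_⟩
  have hOPTj_le : OPTj ≤ T := by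
    simpa [hb.ne'] using hOPTj.2 (mem_dualValues_single_add_single hrow hb j
      fun i => by linarith [(hμ i).2])
  obtain ⟨y, hy0, hy, rfl⟩ := hOPTj.1
  have hU := hOPTjU.2 (add_single_mem_dualValues (fun k i => (hCLC k i).2) hrowL hb hε
    (by positivity : 0 ≤ 2 * ε) (fun i => by linarith [(hμU i).2, (hCUrow i).2]) hy0 hy)
  rw [const_dotProduct] at hOPTj_le hU ⊢
  set S := ∑ k, y k
  have hS : S ≤ 1 / b + 1 := by
    rw [div_add_one hb.ne', le_div_iff₀ hb]
    nlinarith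
  calc OPTjU ≤ T * b * S - T * b + ε * T * (S + 2) := by
        convert hU using 2; field_simp
    _ ≤ T * b * S - T * b + ε * T * (3 * (2 + 1 / b)) := by
        gcongr; linarith [one_div_pos.2 hb]
    _ = T * b * S - T * b + 3 * (2 + 1 / b) * ε * T := by ring

/-- With `μ ≤ μ^U ≤ μ + ε𝟙`, `0 ≤ C^L ≤ C ≤ C^L + ε𝟙𝟙ᵀ` (first rows of `C`,
`C^L` equal to `b𝟙ᵀ`) and a row estimate `C_{j,·} ≤ C^U_{j,·} ≤ C_{j,·} + ε𝟙ᵀ`, the UCB value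
`OPTⱼ^U` of `min Bᵀy − Tb s.t. (C^L)ᵀy ≥ μ^U + (C^U_{j,·})ᵀ, y ≥ 0` satisfies
`OPTⱼ ≤ OPTⱼ^U ≤ OPTⱼ + 3(2 + 1/b)·εT`. -/
theorem stmt8 (m d : ℕ) (hm : 0 < m) (hd : 0 < d)
    (μ μU : Fin m → ℝ) (C CL : Matrix (Fin d) (Fin m) ℝ)
    (ε b T : ℝ) (hε : 0 ≤ ε) (hb : 0 < b) (hb1 : b ≤ 1) (hT : 0 < T)
    (B : Fin d → ℝ) (hB : B = fun _ => T * b)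
    (hμ : ∀ i, μ i ∈ Set.Icc (0 : ℝ) 1)
    (hμU : ∀ i, μ i ≤ μU i ∧ μU i ≤ μ i + ε)
    (hCL0 : ∀ j i, 0 ≤ CL j i)
    (hCLC : ∀ j i, CL j i ≤ C j i ∧ C j i ≤ CL j i + ε)
    (hrow : ∀ i, C ⟨0, hd⟩ i = b) (hrowL : ∀ i, CL ⟨0, hd⟩ i = b)
    (j : Fin d) (CUrow : Fin m → ℝ)
    (hCUrow : ∀ i, C j i ≤ CUrow i ∧ CUrow i ≤ C j i + ε)
    (OPTj OPTjU : ℝ)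
    (hOPTj : IsLeast {r : ℝ | ∃ y : Fin d → ℝ,
      (∀ j', 0 ≤ y j') ∧ (∀ i, μ i + C j i ≤ Cᵀ.mulVec y i) ∧
      r = B ⬝ᵥ y - T * b} OPTj)
    (hOPTjU : IsLeast {r : ℝ | ∃ y : Fin d → ℝ,
      (∀ j', 0 ≤ y j') ∧ (∀ i, μU i + CUrow i ≤ CLᵀ.mulVec y i) ∧
      r = B ⬝ᵥ y - T * b} OPTjU) :
    OPTj ≤ OPTjU ∧ OPTjU ≤ OPTj + 3 * (2 + 1 / b) * ε * T :=
  stmt8_general m d hd μ μU C CL ε b T hε hb hT B hB hμ hμU hCLC hrow hrowL j CUrow hCUrow OPTj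
    OPTjU hOPTj hOPTjU
end

section
/- Let C ∈ ℝ^{m×m} be an invertible matrix, μ ∈ ℝ^m, and B ∈ ℝ^m, and suppose the feasible region P = {x ∈ ℝ^m : Cx ≤ B, x ≥ 0} is nonempty and bounded. Let OPT = max_{x ∈ P} μᵀx, and for each i ∈ [m] let OPT_i = max{μᵀx : x ∈ P, x_i = 0}. If OPT_i < OPT for every i ∈ [m], then C⁻¹B ≥ 0 (entrywise), C⁻¹B ∈ P, and μᵀ(C⁻¹B) = OPT; i.e., the unique solution of Cx = B is nonnegative and optimal. -/
/-!
Every optimal point `x` is strictly positive: if `xᵢ = 0`, then `OPT` would be attained on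
the face `xᵢ = 0`, i.e. `OPTᵢ = OPT`. Among the optimal points (a compact set) pick one
maximizing `∑ⱼ (Cx)ⱼ`. Moving from `x` towards `y = C⁻¹B` keeps `Cz ≤ B`, and by positivity
of `x` also `z ≥ 0` for small steps in both directions; so `μ` is constant along the line,
the small forward steps stay optimal, and they increase `∑ⱼ (Cz)ⱼ` unless `Cx = B`.
Hence `x = C⁻¹B`.
-/

open Matrix Finset Filter Topology

variable {m n : Type*} [Fintype n]

def feasibleSet (C : Matrix m n ℝ) (B : m → ℝ) : Set (n → ℝ) :=
  {x | (∀ j, C.mulVec x j ≤ B j) ∧ ∀ i, 0 ≤ x i}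

lemma isClosed_feasibleSet (C : Matrix m n ℝ) (B : m → ℝ) : IsClosed (feasibleSet C B) := by
  simp only [feasibleSet, Set.ofPred_and, Set.ofPred_forall]
  exact (isClosed_iInter fun j => isClosed_le (by fun_prop) continuous_const).inter
    (isClosed_iInter fun i => isClosed_le continuous_const (continuous_apply i))

lemma apply_ne_zero_of_isGreatest_lt {P : Set (n → ℝ)} (hP : IsCompact P) {μ : n → ℝ}
    {OPT : ℝ} {i : n} (hlt : ∀ v, IsGreatest {r | ∃ x ∈ P, x i = 0 ∧ r = μ ⬝ᵥ x} v → v < OPT)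
    {x : n → ℝ} (hx : x ∈ P) (hxOPT : μ ⬝ᵥ x = OPT) : x i ≠ 0 := by
  intro hxi
  have hface : {r | ∃ x ∈ P, x i = 0 ∧ r = μ ⬝ᵥ x} = (μ ⬝ᵥ ·) '' (P ∩ {x | x i = 0}) := by
    ext r
    simp [eq_comm, and_assoc]
  have hcompact : IsCompact {r | ∃ x ∈ P, x i = 0 ∧ r = μ ⬝ᵥ x} := hface ▸
    (hP.inter_right (isClosed_eq (continuous_apply i) continuous_const)).image (by fun_prop)
  obtain ⟨v, hv⟩ := hcompact.exists_isGreatest ⟨OPT, x, hx, hxi, hxOPT.symm⟩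
  exact (hlt v hv).not_ge (hv.2 ⟨x, hx, hxi, hxOPT.symm⟩)

lemma eventually_nonneg_add_smul {x : n → ℝ} (hx : ∀ i, 0 < x i) (d : n → ℝ) :
    ∀ᶠ s in 𝓝 (0 : ℝ), ∀ i, 0 ≤ (x + s • d) i := by
  refine eventually_all.2 fun i => ?_
  have hcont : Continuous fun s : ℝ => x i + s * d i := by fun_prop
  filter_upwards [hcont.continuousAt.eventually (eventually_gt_nhds (by simpa using hx i))]
    with s hs
  simpa using hs.le

lemma mulVec_add_smul_sub_le {C : Matrix m n ℝ} {B : m → ℝ} {x y : n → ℝ}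
    (hx : ∀ j, (C *ᵥ x) j ≤ B j) (hy : C *ᵥ y = B) {s : ℝ} (hs : s ≤ 1) (j : m) : (C *ᵥ (x + s • (y - x))) j ≤ B j := by
  simp only [mulVec_add, mulVec_smul, mulVec_sub, hy, Pi.add_apply, Pi.smul_apply, Pi.sub_apply,
    smul_eq_mul]
  nlinarith [mul_nonneg (sub_nonneg.2 hs) (sub_nonneg.2 (hx j))]

lemma eventually_add_smul_sub_mem_feasibleSet {C : Matrix m n ℝ} {B : m → ℝ} {x y : n → ℝ}
    (hx : x ∈ feasibleSet C B) (hxpos : ∀ i, 0 < x i) (hy : C *ᵥ y = B) :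
    ∀ᶠ s in 𝓝 (0 : ℝ), x + s • (y - x) ∈ feasibleSet C B := by
  filter_upwards [eventually_nonneg_add_smul hxpos (y - x), eventually_lt_nhds zero_lt_one]
    with s hnonneg hs
  exact ⟨mulVec_add_smul_sub_le hx.1 hy hs.le, hnonneg⟩

lemma dotProduct_eq_zero_of_isLocalMax {μ x d : n → ℝ}
    (h : IsLocalMax (fun s : ℝ => μ ⬝ᵥ (x + s • d)) 0) : μ ⬝ᵥ d = 0 := by
  refine h.hasDerivAt_eq_zero ?_
  simp only [dotProduct_add, dotProduct_smul, smul_eq_mul]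
  simpa using ((hasDerivAt_id (0 : ℝ)).mul_const (μ ⬝ᵥ d)).const_add (μ ⬝ᵥ x)

lemma mulVec_eq_of_isMaxOn [Fintype m] {C : Matrix m n ℝ} {B : m → ℝ} {μ x y : n → ℝ} {OPT : ℝ}
    (hOPT : ∀ z ∈ feasibleSet C B, μ ⬝ᵥ z ≤ OPT) (hx : x ∈ feasibleSet C B)
    (hxOPT : μ ⬝ᵥ x = OPT) (hxpos : ∀ i, 0 < x i)
    (hmax : IsMaxOn (fun z => ∑ j, (C *ᵥ z) j) (feasibleSet C B ∩ {z | μ ⬝ᵥ z = OPT}) x)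
    (hy : C *ᵥ y = B) : C *ᵥ x = B := by
  have hline := eventually_add_smul_sub_mem_feasibleSet hx hxpos hy
  have hμ : μ ⬝ᵥ (y - x) = 0 :=
    dotProduct_eq_zero_of_isLocalMax (x := x)
      (hline.mono fun s hs => by simpa [hxOPT] using hOPT _ hs)
  obtain ⟨s, hs, hspos⟩ :=
    ((hline.filter_mono nhdsWithin_le_nhds).and
      (self_mem_nhdsWithin : ∀ᶠ s in 𝓝[>] (0 : ℝ), 0 < s)).exists
  have hsOPT : μ ⬝ᵥ (x + s • (y - x)) = OPT := by
    rw [dotProduct_add, dotProduct_smul, hμ, smul_zero, add_zero, hxOPT]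
  have hslack : ∑ j, (B j - (C *ᵥ x) j) ≤ 0 := by
    have hle := hmax ⟨hs, hsOPT⟩
    simp only [Set.mem_ofPred_eq, mulVec_add, mulVec_smul, mulVec_sub, hy, Pi.add_apply,
      Pi.smul_apply, Pi.sub_apply, smul_eq_mul, sum_add_distrib, ← mul_sum] at hle
    nlinarith
  have hslack_nonneg : ∀ j ∈ univ, 0 ≤ B j - (C *ᵥ x) j := fun j _ => sub_nonneg.2 (hx.1 j)
  funext j
  have := (sum_eq_zero_iff_of_nonneg hslack_nonneg).1
    (le_antisymm hslack (sum_nonneg hslack_nonneg)) j (mem_univ j)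
  linarith

theorem stmt13_general (m : ℕ)
    (C : Matrix (Fin m) (Fin m) ℝ) (hinv : IsUnit C.det)
    (μ B : Fin m → ℝ)
    (Pset : Set (Fin m → ℝ))
    (hPset : Pset = {x : Fin m → ℝ | (∀ j, C.mulVec x j ≤ B j) ∧ ∀ i, 0 ≤ x i})
    (hbdd : Bornology.IsBounded Pset)
    (OPT : ℝ)
    (hOPT : IsGreatest {r : ℝ | ∃ x ∈ Pset, r = μ ⬝ᵥ x} OPT)
    (hOPTi : ∀ i : Fin m, ∀ vi : ℝ,
      IsGreatest {r : ℝ | ∃ x ∈ Pset, x i = 0 ∧ r = μ ⬝ᵥ x} vi → vi < OPT) :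
    (∀ j, 0 ≤ C⁻¹.mulVec B j) ∧ C⁻¹.mulVec B ∈ Pset ∧ μ ⬝ᵥ C⁻¹.mulVec B = OPT := by
  change Pset = feasibleSet C B at hPset
  subst hPset
  have hP : IsCompact (feasibleSet C B) :=
    Metric.isCompact_of_isClosed_isBounded (isClosed_feasibleSet C B) hbdd
  have hO : IsCompact (feasibleSet C B ∩ {x | μ ⬝ᵥ x = OPT}) :=
    hP.inter_right (isClosed_eq (by fun_prop) continuous_const)
  obtain ⟨x₀, hx₀, hx₀OPT⟩ := hOPT.1
  obtain ⟨x, ⟨hx, hxOPT⟩, hmax⟩ := hO.exists_isMaxOn ⟨x₀, hx₀, hx₀OPT.symm⟩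
    (by fun_prop : Continuous fun z => ∑ j, (C *ᵥ z) j).continuousOn
  have hxpos : ∀ i, 0 < x i := fun i =>
    (hx.2 i).lt_of_ne' (apply_ne_zero_of_isGreatest_lt hP (hOPTi i) hx hxOPT)
  have hCx : C *ᵥ x = B := mulVec_eq_of_isMaxOn (fun z hz => hOPT.2 ⟨z, hz, rfl⟩) hx hxOPT
    hxpos hmax (y := C⁻¹ *ᵥ B) (by rw [mulVec_mulVec, mul_nonsing_inv C hinv, one_mulVec])
  have hxeq : C⁻¹ *ᵥ B = x := by rw [← hCx, mulVec_mulVec, nonsing_inv_mul C hinv, one_mulVec]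
  exact hxeq ▸ ⟨hx.2, hx, hxOPT⟩

/-- Let `C` be an invertible `m×m` matrix and suppose the polytope
`P = {x : Cx ≤ B, x ≥ 0}` is nonempty and bounded. Let `OPT = max_{x ∈ P} μᵀx` and, for
each `i`, `OPTᵢ = max{μᵀx : x ∈ P, xᵢ = 0}`. If `OPTᵢ < OPT` for every `i`, then `C⁻¹B ≥ 0`,
`C⁻¹B ∈ P`, and `μᵀ(C⁻¹B) = OPT`. -/
theorem stmt13 (m : ℕ) (hm : 0 < m)
    (C : Matrix (Fin m) (Fin m) ℝ) (hinv : IsUnit C.det)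
    (μ B : Fin m → ℝ)
    (Pset : Set (Fin m → ℝ))
    (hPset : Pset = {x : Fin m → ℝ | (∀ j, C.mulVec x j ≤ B j) ∧ ∀ i, 0 ≤ x i})
    (hne : Pset.Nonempty) (hbdd : Bornology.IsBounded Pset)
    (OPT : ℝ)
    (hOPT : IsGreatest {r : ℝ | ∃ x ∈ Pset, r = μ ⬝ᵥ x} OPT)
    (hOPTi : ∀ i : Fin m, ∀ vi : ℝ,
      IsGreatest {r : ℝ | ∃ x ∈ Pset, x i = 0 ∧ r = μ ⬝ᵥ x} vi → vi < OPT) :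
    (∀ j, 0 ≤ C⁻¹.mulVec B j) ∧ C⁻¹.mulVec B ∈ Pset ∧ μ ⬝ᵥ C⁻¹.mulVec B = OPT :=
  stmt13_general m C hinv μ B Pset hPset hbdd OPT hOPT hOPTi
end
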